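/- arXiv:1208.6571 — 6 statements merged into one kernel-verified Lean document; each statement's English description precedes it below -/
import Mathlib

section
/- If A is a bounded positive injective operator on H and B is A-symmetric (B*A = AB), then for every f ∈ H, ⟨A(Bf), Bf⟩ ≤ ‖B‖² ⟨Af, f⟩; that is, the extension of B to the completion of H under the A-inner product is bounded with norm at most ‖B‖. -/
/-!
Factor the positive operator as `A = T† T`, so that `re ⟪A g, g⟫ = ‖T g‖²`. The `A`-symmetry of
`B` moves `B ^ k` across the `A`-form: `‖T (B ^ k f)‖² = re ⟪T (B ^ (2k) f), T f⟫`, which by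
Cauchy–Schwarz is at most `‖T (B ^ (2k) f)‖ ‖T f‖`. Iterating along `k = 2 ^ n` gives
`‖T (B f)‖ ^ 2 ^ n ≤ ‖T‖ ‖f‖ ‖B‖ ^ 2 ^ n ‖T f‖ ^ (2 ^ n - 1)`, and taking `2 ^ n`-th roots as
`n → ∞` leaves `‖T (B f)‖ ≤ ‖B‖ ‖T f‖`.
-/

open ContinuousLinearMap Filter Topology
open scoped InnerProductSpace

theorem le_of_forall_pow_le_mul_pow {x z C : ℝ} (hz : 0 ≤ z) {k : ℕ → ℕ}
    (hk : Tendsto k atTop atTop) (h : ∀ n, x ^ k n ≤ C * z ^ k n) : x ≤ z := by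
  by_contra! hzx
  have hx : 0 < x := hz.trans_lt hzx
  have hlim : Tendsto (fun n ↦ C * (z / x) ^ k n) atTop (𝓝 0) := by
    simpa using ((tendsto_pow_atTop_nhds_zero_of_lt_one (div_nonneg hz hx.le)
      ((div_lt_one hx).2 hzx)).comp hk).const_mul C
  obtain ⟨n, hn⟩ := (hlim.eventually (gt_mem_nhds one_pos)).exists
  rw [div_pow, mul_div_assoc', div_lt_one (by positivity)] at hn
  linarith [h n]

theorem pow_two_pow_le_of_sq_le {a : ℕ → ℝ} (ha : ∀ k, 0 ≤ a k)
    (h : ∀ k, a k ^ 2 ≤ a (2 * k) * a 0) (n : ℕ) :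
    a 1 ^ 2 ^ n ≤ a (2 ^ n) * a 0 ^ (2 ^ n - 1) := by
  induction n with
  | zero => simp
  | succ n ih =>
    have hexp : 2 ^ (n + 1) - 1 = 2 * (2 ^ n - 1) + 1 := by
      have := Nat.one_le_two_pow (n := n); rw [pow_succ]; omega
    calc a 1 ^ 2 ^ (n + 1) = (a 1 ^ 2 ^ n) ^ 2 := by rw [pow_succ, pow_mul]
      _ ≤ (a (2 ^ n) * a 0 ^ (2 ^ n - 1)) ^ 2 := by gcongr; exact pow_nonneg (ha 1) _
      _ = a (2 ^ n) ^ 2 * a 0 ^ (2 * (2 ^ n - 1)) := by rw [mul_pow, ← pow_mul']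
      _ ≤ a (2 * 2 ^ n) * a 0 * a 0 ^ (2 * (2 ^ n - 1)) :=
        mul_le_mul_of_nonneg_right (h _) (pow_nonneg (ha 0) _)
      _ = a (2 ^ (n + 1)) * a 0 ^ (2 ^ (n + 1) - 1) := by
        rw [hexp, pow_succ' 2 n, pow_succ]; ring

theorem le_mul_of_sq_le_mul_of_le_pow {a : ℕ → ℝ} {b C : ℝ} (ha : ∀ k, 0 ≤ a k) (hb : 0 ≤ b)
    (h : ∀ k, a k ^ 2 ≤ a (2 * k) * a 0) (hC : ∀ k, a k ≤ C * b ^ k) : a 1 ≤ b * a 0 := by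
  rcases (mul_nonneg hb (ha 0)).eq_or_lt with hzero | hpos
  · have hsq : a 1 ^ 2 ≤ C * b * (b * a 0) := by
      nlinarith [h 1, hC 2, ha 0]
    rw [← hzero, mul_zero] at hsq
    nlinarith [ha 1, sq_nonneg (a 1)]
  have ha0 : 0 < a 0 := pos_of_mul_pos_right hpos hb
  refine le_of_forall_pow_le_mul_pow (C := C / a 0) hpos.le
    (tendsto_pow_atTop_atTop_of_one_lt one_lt_two) fun n ↦ ?_
  calc a 1 ^ 2 ^ n ≤ a (2 ^ n) * a 0 ^ (2 ^ n - 1) := pow_two_pow_le_of_sq_le ha h n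
    _ ≤ C * b ^ 2 ^ n * a 0 ^ (2 ^ n - 1) :=
      mul_le_mul_of_nonneg_right (hC _) (pow_nonneg (ha 0) _)
    _ = C / a 0 * (b * a 0) ^ 2 ^ n := by
      rw [mul_pow, ← pow_sub_one_mul (pow_ne_zero n two_ne_zero) (a 0)]; field_simp

theorem norm_pow_apply_le {𝕜 E : Type*} [NontriviallyNormedField 𝕜] [SeminormedAddCommGroup E]
    [NormedSpace 𝕜 E] (B : E →L[𝕜] E) (k : ℕ) (x : E) : ‖(B ^ k) x‖ ≤ ‖B‖ ^ k * ‖x‖ := by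
  induction k with
  | zero => simp
  | succ k ih =>
    rw [pow_succ', mul_apply_eq_comp, pow_succ', mul_assoc]
    exact (B.le_opNorm _).trans (by gcongr)

section

variable {H : Type*} [NormedAddCommGroup H] [InnerProductSpace ℂ H] [CompleteSpace H]

theorem adjoint_pow_comp_of_adjoint_comp {A B : H →L[ℂ] H} (hB : adjoint B ∘L A = A ∘L B)
    (k : ℕ) : adjoint (B ^ k) ∘L A = A ∘L B ^ k := by
  rw [← star_eq_adjoint, star_pow]
  exact ((SemiconjBy.pow_right hB.symm k).eq).symm

theorem inner_apply_pow_two_mul {A B : H →L[ℂ] H} (hB : adjoint B ∘L A = A ∘L B) (k : ℕ)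
    (g : H) : ⟪A ((B ^ (2 * k)) g), g⟫_ℂ = ⟪A ((B ^ k) g), (B ^ k) g⟫_ℂ := by
  rw [two_mul, pow_add, mul_apply_eq_comp, ← comp_apply A, ← adjoint_pow_comp_of_adjoint_comp hB,
    comp_apply, adjoint_inner_left]

theorem norm_apply_pow_sq_le {T B : H →L[ℂ] H}
    (hB : adjoint B ∘L (adjoint T ∘L T) = (adjoint T ∘L T) ∘L B) (f : H) (k : ℕ) :
    ‖T ((B ^ k) f)‖ ^ 2 ≤ ‖T ((B ^ (2 * k)) f)‖ * ‖T f‖ := by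
  calc ‖T ((B ^ k) f)‖ ^ 2 = RCLike.re ⟪(adjoint T ∘L T) ((B ^ (2 * k)) f), f⟫_ℂ := by
        rw [apply_norm_sq_eq_inner_adjoint_left, inner_apply_pow_two_mul hB]
    _ = RCLike.re ⟪T ((B ^ (2 * k)) f), T f⟫_ℂ := by rw [comp_apply, adjoint_inner_left]
    _ ≤ ‖T ((B ^ (2 * k)) f)‖ * ‖T f‖ := re_inner_le_norm _ _

theorem norm_apply_le_of_adjoint_comp {T B : H →L[ℂ] H}
    (hB : adjoint B ∘L (adjoint T ∘L T) = (adjoint T ∘L T) ∘L B) (f : H) :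
    ‖T (B f)‖ ≤ ‖B‖ * ‖T f‖ := by
  refine le_mul_of_sq_le_mul_of_le_pow (a := fun k ↦ ‖T ((B ^ k) f)‖) (C := ‖T‖ * ‖f‖)
    (fun _ ↦ norm_nonneg _) (norm_nonneg B) (norm_apply_pow_sq_le hB f) fun k ↦ ?_
  calc ‖T ((B ^ k) f)‖ ≤ ‖T‖ * (‖B‖ ^ k * ‖f‖) :=
        (T.le_opNorm _).trans (by gcongr; exact norm_pow_apply_le B k f)
    _ = ‖T‖ * ‖f‖ * ‖B‖ ^ k := by ring

theorem re_inner_adjoint_comp_self_apply_le {T B : H →L[ℂ] H}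
    (hB : adjoint B ∘L (adjoint T ∘L T) = (adjoint T ∘L T) ∘L B) (f : H) :
    (⟪(adjoint T ∘L T) (B f), B f⟫_ℂ).re ≤ ‖B‖ ^ 2 * (⟪(adjoint T ∘L T) f, f⟫_ℂ).re := by
  rw [← RCLike.re_to_complex, ← RCLike.re_to_complex, ← apply_norm_sq_eq_inner_adjoint_left,
    ← apply_norm_sq_eq_inner_adjoint_left, ← mul_pow]
  exact pow_le_pow_left₀ (norm_nonneg _) (norm_apply_le_of_adjoint_comp hB f) 2

end

theorem a_symmetric_extension_bounded_general
    {H : Type*} [NormedAddCommGroup H] [InnerProductSpace ℂ H] [CompleteSpace H]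
    (A B : H →L[ℂ] H) (hA : A.IsPositive)
    (hB : (adjoint B) ∘L A = A ∘L B) :
    ∀ f : H, (⟪A (B f), B f⟫_ℂ).re ≤ ‖B‖ ^ 2 * (⟪A f, f⟫_ℂ).re := by
  obtain ⟨T, rfl⟩ := CStarAlgebra.nonneg_iff_eq_star_mul_self.mp ((nonneg_iff_isPositive A).mpr hA)
  rw [star_eq_adjoint] at hB
  exact re_inner_adjoint_comp_self_apply_le hB

/-- If `A` is positive injective and `B` is `A`-symmetric, then
`⟨A (B f), B f⟩ ≤ ‖B‖² ⟨A f, f⟩` for every `f`: the extension of `B` to the completion of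
`H` under the `A`-inner product is bounded with norm at most `‖B‖`. -/
theorem a_symmetric_extension_bounded
    {H : Type*} [NormedAddCommGroup H] [InnerProductSpace ℂ H] [CompleteSpace H]
    (A B : H →L[ℂ] H) (hA : A.IsPositive) (hAinj : Function.Injective A)
    (hB : (adjoint B) ∘L A = A ∘L B) :
    ∀ f : H, (⟪A (B f), B f⟫_ℂ).re ≤ ‖B‖ ^ 2 * (⟪A f, f⟫_ℂ).re :=
  a_symmetric_extension_bounded_general A B hA hB
end

section
/- A closed subspace S of H is A-compatible (i.e. there exists an idempotent Q with range S and Q*A = AQ) if and only if S equals the intersection of H with the L-closure of S and the orthogonal projection P onto the L-closure of S satisfies P(H) ⊆ H, where L is the completion of H with respect to the A-inner product. -/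
/-!
Let `K` be the `L`-closure of `e S`. For an idempotent `Q` with range `S`, `Q* A = A Q` says
that `Q` is symmetric for `[f, g] = ⟪e f, e g⟫`, which means exactly that `e f - e (Q f)` is
orthogonal to `e S`, hence to `K`, i.e. `P_K (e f) = e (Q f)`. Conversely, if `P_K` maps `e H`
into `e H`, then `Q = e⁻¹ ∘ P_K ∘ e` is linear, bounded by the closed graph theorem, idempotent
and symmetric, with range `e⁻¹ K`.
-/

open ContinuousLinearMap Filter Topology
open scoped InnerProductSpace

theorem ContinuousLinearMap.exists_apply_eq_of_range_subset {𝕜 D E G : Type*}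
    [NontriviallyNormedField 𝕜] [NormedAddCommGroup D] [NormedSpace 𝕜 D] [CompleteSpace D]
    [NormedAddCommGroup E] [NormedSpace 𝕜 E] [CompleteSpace E]
    [NormedAddCommGroup G] [NormedSpace 𝕜 G] (φ : D →L[𝕜] G) {e : E →L[𝕜] G}
    (he : Function.Injective e) (hφe : Set.range φ ⊆ Set.range e) :
    ∃ Q : D →L[𝕜] E, ∀ x, e (Q x) = φ x := by
  let Q : D →ₗ[𝕜] E :=
    (LinearEquiv.ofInjective (e : E →ₗ[𝕜] G) he).symm.toLinearMap ∘ₗ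
      (φ : D →ₗ[𝕜] G).codRestrict _ fun x => hφe ⟨x, rfl⟩
  have heQ : ∀ x, e (Q x) = φ x := fun _ =>
    LinearEquiv.ofInjective_symm_apply (f := (e : E →ₗ[𝕜] G)) (h := he) _
  refine ⟨⟨Q, Q.continuous_of_seq_closed_graph fun u x y hu hQu => he ?_⟩, heQ⟩
  have h_lim : Tendsto (fun n => e (Q (u n))) atTop (𝓝 (φ x)) :=
    ((φ.continuous.tendsto x).comp hu).congr fun n => (heQ (u n)).symm
  rw [heQ]
  exact tendsto_nhds_unique ((e.continuous.tendsto y).comp hQu) h_lim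

theorem Submodule.starProjection_eq_iff {𝕜 E : Type*} [RCLike 𝕜] [NormedAddCommGroup E]
    [InnerProductSpace 𝕜 E] (K : Submodule 𝕜 E) [K.HasOrthogonalProjection] {u v : E} :
    K.starProjection u = v ↔ v ∈ K ∧ ∀ w ∈ K, ⟪u - v, w⟫_𝕜 = 0 := by
  refine ⟨?_, fun h => K.eq_starProjection_of_mem_of_inner_eq_zero h.1 h.2⟩
  rintro rfl
  exact ⟨K.starProjection_apply_mem u, K.starProjection_inner_eq_zero u⟩

section InnerEmbedding

variable {𝕜 H L : Type*} [RCLike 𝕜] [NormedAddCommGroup H] [InnerProductSpace 𝕜 H]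
  [NormedAddCommGroup L] [InnerProductSpace 𝕜 L] {A : H →L[𝕜] H} {e : H →ₗ[𝕜] L}

theorem injective_of_inner_map_map_eq (hInner : ∀ f g, ⟪e f, e g⟫_𝕜 = ⟪A f, g⟫_𝕜)
    (hA : Function.Injective A) : Function.Injective e := by
  refine (injective_iff_map_eq_zero e).2 fun f hf => hA ?_
  rw [map_zero, ← inner_self_eq_zero (𝕜 := 𝕜), ← hInner f (A f), hf, inner_zero_left]

theorem norm_map_sq_le_of_inner_map_map_eq
    (hInner : ∀ f g, ⟪e f, e g⟫_𝕜 = ⟪A f, g⟫_𝕜) (f : H) : ‖e f‖ ^ 2 ≤ ‖A‖ * ‖f‖ ^ 2 :=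
  calc ‖e f‖ ^ 2 = RCLike.re ⟪A f, f⟫_𝕜 := by rw [← hInner, inner_self_eq_norm_sq]
    _ ≤ ‖⟪A f, f⟫_𝕜‖ := RCLike.re_le_norm _
    _ ≤ ‖A f‖ * ‖f‖ := norm_inner_le_norm _ _
    _ ≤ ‖A‖ * ‖f‖ * ‖f‖ := by gcongr; exact A.le_opNorm f
    _ = ‖A‖ * ‖f‖ ^ 2 := by ring

theorem continuous_of_inner_map_map_eq (hInner : ∀ f g, ⟪e f, e g⟫_𝕜 = ⟪A f, g⟫_𝕜) :
    Continuous e :=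
  AddMonoidHomClass.continuous_of_bound e √‖A‖ fun f => by
    rw [← pow_le_pow_iff_left₀ (norm_nonneg _) (by positivity) two_ne_zero, mul_pow,
      Real.sq_sqrt (norm_nonneg _)]
    exact norm_map_sq_le_of_inner_map_map_eq hInner f

theorem adjoint_comp_eq_comp_iff [CompleteSpace H]
    (hInner : ∀ f g, ⟪e f, e g⟫_𝕜 = ⟪A f, g⟫_𝕜) (Q : H →L[𝕜] H) :
    adjoint Q ∘L A = A ∘L Q ↔ ∀ f g, ⟪e (Q f), e g⟫_𝕜 = ⟪e f, e (Q g)⟫_𝕜 := by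
  simp only [hInner, ← adjoint_inner_left Q]
  refine ⟨fun h f g => by rw [← comp_apply A Q, ← h, comp_apply], fun h => ?_⟩
  exact ext fun f => ext_inner_right 𝕜 fun g => (h f g).symm

theorem starProjection_closure_map_range_apply [CompleteSpace L] {Q : H →L[𝕜] H}
    (hQQ : Q ∘L Q = Q) (hQ : ∀ f g, ⟪e (Q f), e g⟫_𝕜 = ⟪e f, e (Q g)⟫_𝕜) (f : H) :
    ((Q : H →ₗ[𝕜] H).range.map e).topologicalClosure.starProjection (e f) = e (Q f) := by
  refine Submodule.eq_starProjection_of_mem_orthogonal (Submodule.le_topologicalClosure _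
    (Submodule.mem_map_of_mem (LinearMap.mem_range_self (Q : H →ₗ[𝕜] H) f))) ?_
  rw [Submodule.orthogonal_closure]
  rintro _ ⟨_, ⟨t, rfl⟩, rfl⟩
  rw [coe_coe, inner_sub_right, hQ t f, hQ t (Q f), ← comp_apply Q Q, hQQ, sub_self]

section StarProjection

variable {K : Submodule 𝕜 L} [K.HasOrthogonalProjection] {Q : H →L[𝕜] H}

theorem comp_self_eq_of_apply_eq_starProjection (hQ : ∀ f, e (Q f) = K.starProjection (e f))
    (he : Function.Injective e) : Q ∘L Q = Q :=
  ext fun f => he <| by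
    rw [comp_apply, hQ, hQ, Submodule.starProjection_eq_self_iff.2 (K.starProjection_apply_mem _)]

theorem range_eq_preimage_of_apply_eq_starProjection
    (hQ : ∀ f, e (Q f) = K.starProjection (e f)) (he : Function.Injective e) :
    Set.range Q = e ⁻¹' K := by
  ext f
  refine ⟨?_, fun hf => ⟨f, he ?_⟩⟩
  · rintro ⟨g, rfl⟩
    rw [Set.mem_preimage, hQ]
    exact K.starProjection_apply_mem (e g)
  · rw [hQ, Submodule.starProjection_eq_self_iff.2 hf]

theorem inner_map_apply_comm_of_apply_eq_starProjection
    (hQ : ∀ f, e (Q f) = K.starProjection (e f)) (f g : H) :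
    ⟪e (Q f), e g⟫_𝕜 = ⟪e f, e (Q g)⟫_𝕜 := by
  rw [hQ, hQ, K.inner_starProjection_left_eq_right]

end StarProjection

end InnerEmbedding

theorem compatible_iff_projection_preserves_H_general
    {H L : Type*} [NormedAddCommGroup H] [InnerProductSpace ℂ H] [CompleteSpace H]
    [NormedAddCommGroup L] [InnerProductSpace ℂ L] [CompleteSpace L]
    (A : H →L[ℂ] H) (hAinj : Function.Injective A)
    (e : H →ₗ[ℂ] L)
    (hInner : ∀ f g : H, ⟪e f, e g⟫_ℂ = ⟪A f, g⟫_ℂ)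
    (S : Submodule ℂ H) :
    (∃ Q : H →L[ℂ] H, Q ∘L Q = Q ∧ Set.range Q = (S : Set H) ∧
        (adjoint Q) ∘L A = A ∘L Q) ↔
      (e ⁻¹' closure (e '' (S : Set H)) = (S : Set H) ∧
        ∀ f : H, ∃ g : H, e g ∈ closure (e '' (S : Set H)) ∧
          ∀ s ∈ closure (e '' (S : Set H)), ⟪e f - e g, s⟫_ℂ = 0) := by
  have he := injective_of_inner_map_map_eq hInner hAinj
  set K := (S.map e).topologicalClosure
  have hK : closure (e '' (S : Set H)) = K := by
    rw [Submodule.topologicalClosure_coe, Submodule.map_coe]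
  simp only [hK, SetLike.mem_coe, ← K.starProjection_eq_iff]
  constructor
  · rintro ⟨Q, hQQ, hQS, hQA⟩
    obtain rfl : (Q : H →ₗ[ℂ] H).range = S :=
      SetLike.coe_injective ((LinearMap.coe_range _).trans hQS)
    have hQ :=
      starProjection_closure_map_range_apply hQQ ((adjoint_comp_eq_comp_iff hInner Q).1 hQA)
    exact ⟨(range_eq_preimage_of_apply_eq_starProjection (fun f => (hQ f).symm) he).symm,
      fun f => ⟨Q f, hQ f⟩⟩
  · rintro ⟨hKS, hproj⟩
    let eL : H →L[ℂ] L := ⟨e, continuous_of_inner_map_map_eq hInner⟩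
    obtain ⟨Q, hQ⟩ := (K.starProjection ∘L eL).exists_apply_eq_of_range_subset (e := eL) he
      (by rintro _ ⟨f, rfl⟩; obtain ⟨g, hg⟩ := hproj f; exact ⟨g, hg.symm⟩)
    refine ⟨Q, comp_self_eq_of_apply_eq_starProjection hQ he,
      (range_eq_preimage_of_apply_eq_starProjection hQ he).trans hKS, ?_⟩
    exact (adjoint_comp_eq_comp_iff hInner Q).2
      (inner_map_apply_comm_of_apply_eq_starProjection hQ)

/-- A closed subspace `S ⊆ H` is `A`-compatible (there is an idempotent `Q` with range `S`
and `Q* A = A Q`) if and only if `S` equals the intersection of `H` with the `L`-closure of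
`S`, and the orthogonal projection onto the `L`-closure of `S` maps `H` into `H`. Here `L`
is the completion of `H` under the `A`-inner product, realized by a dense embedding
`e : H → L` with `⟪e f, e g⟫ = ⟨A f, g⟩`. The condition that the orthogonal projection of
`e f` onto the closure of `e '' S` again lies in `e '' H` is expressed by the existence of
`g : H` with `e g` in the closure and `e f - e g` orthogonal to the closure. -/
theorem compatible_iff_projection_preserves_H
    {H L : Type*} [NormedAddCommGroup H] [InnerProductSpace ℂ H] [CompleteSpace H]
    [NormedAddCommGroup L] [InnerProductSpace ℂ L] [CompleteSpace L]
    (A : H →L[ℂ] H) (hA : A.IsPositive) (hAinj : Function.Injective A)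
    (e : H →ₗ[ℂ] L) (hDense : DenseRange e)
    (hInner : ∀ f g : H, ⟪e f, e g⟫_ℂ = ⟪A f, g⟫_ℂ)
    (S : Submodule ℂ H) (hS : IsClosed (S : Set H)) :
    (∃ Q : H →L[ℂ] H, Q ∘L Q = Q ∧ Set.range Q = (S : Set H) ∧
        (adjoint Q) ∘L A = A ∘L Q) ↔
      (e ⁻¹' closure (e '' (S : Set H)) = (S : Set H) ∧
        ∀ f : H, ∃ g : H, e g ∈ closure (e '' (S : Set H)) ∧
          ∀ s ∈ closure (e '' (S : Set H)), ⟪e f - e g, s⟫_ℂ = 0) :=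
  compatible_iff_projection_preserves_H_general A hAinj e hInner S
end

section
/- If S is an A-compatible closed subspace of H, then the A-symmetric idempotent with range S is unique: if Q₁, Q₂ are idempotents with range S and Q₁*A = AQ₁, Q₂*A = AQ₂, then Q₁ = Q₂. -/
open ContinuousLinearMap

/-! If `Q₁` and `Q₂` are idempotents with the same range, then `Q₁ Q₂ = Q₂` and `Q₂ Q₁ = Q₁`.
Computing `Q₂* A Q₁` in two ways with the `A`-symmetry of `Q₁` and of `Q₂` gives `A Q₁ = A Q₂`,
and `Q₁ = Q₂` follows from the injectivity of `A`. -/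

theorem IsIdempotentElem.mul_eq_right_of_range_subset {R M : Type*} [Semiring R]
    [TopologicalSpace M] [AddCommMonoid M] [Module R M] {p q : M →L[R] M}
    (hp : IsIdempotentElem p) (h : Set.range q ⊆ Set.range p) : p * q = q := by
  ext x
  obtain ⟨y, hy⟩ := h ⟨x, rfl⟩
  change p (q x) = q x
  rw [← hy]
  exact congr($hp.eq y)

theorem mul_eq_mul_of_star_mul_eq_of_mul_eq {R : Type*} [Monoid R] [StarMul R] {a p q : R}
    (hp : star p * a = a * p) (hq : star q * a = a * q) (hpq : p * q = q) (hqp : q * p = p) :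
    a * p = a * q :=
  calc a * p = star q * a * p := by rw [hq, mul_assoc, hqp]
    _ = star (p * q) * a := by rw [mul_assoc, ← hp, star_mul, mul_assoc]
    _ = a * q := by rw [hpq, hq]

theorem a_symmetric_idempotent_unique_general
    {H : Type*} [NormedAddCommGroup H] [InnerProductSpace ℂ H] [CompleteSpace H]
    (A : H →L[ℂ] H) (hAinj : Function.Injective A)
    (S : Submodule ℂ H)
    (Q₁ Q₂ : H →L[ℂ] H) (hQ₁ : Q₁ ∘L Q₁ = Q₁) (hQ₂ : Q₂ ∘L Q₂ = Q₂)
    (hR₁ : Set.range Q₁ = (S : Set H)) (hR₂ : Set.range Q₂ = (S : Set H))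
    (hA₁ : (adjoint Q₁) ∘L A = A ∘L Q₁) (hA₂ : (adjoint Q₂) ∘L A = A ∘L Q₂) :
    Q₁ = Q₂ := by
  have h₁₂ : Q₁ * Q₂ = Q₂ :=
    IsIdempotentElem.mul_eq_right_of_range_subset hQ₁ (by rw [hR₁, hR₂])
  have h₂₁ : Q₂ * Q₁ = Q₁ :=
    IsIdempotentElem.mul_eq_right_of_range_subset hQ₂ (by rw [hR₁, hR₂])
  have hAQ : A * Q₁ = A * Q₂ := by
    refine mul_eq_mul_of_star_mul_eq_of_mul_eq ?_ ?_ h₁₂ h₂₁ <;> rwa [star_eq_adjoint]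
  ext x
  exact hAinj congr($hAQ x)

/-- The `A`-symmetric idempotent with a given range is unique: if `Q₁, Q₂` are idempotents
with the same range `S` and `Q₁* A = A Q₁`, `Q₂* A = A Q₂`, then `Q₁ = Q₂`. -/
theorem a_symmetric_idempotent_unique
    {H : Type*} [NormedAddCommGroup H] [InnerProductSpace ℂ H] [CompleteSpace H]
    (A : H →L[ℂ] H) (hA : A.IsPositive) (hAinj : Function.Injective A)
    (S : Submodule ℂ H) (hS : IsClosed (S : Set H))
    (Q₁ Q₂ : H →L[ℂ] H) (hQ₁ : Q₁ ∘L Q₁ = Q₁) (hQ₂ : Q₂ ∘L Q₂ = Q₂)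
    (hR₁ : Set.range Q₁ = (S : Set H)) (hR₂ : Set.range Q₂ = (S : Set H))
    (hA₁ : (adjoint Q₁) ∘L A = A ∘L Q₁) (hA₂ : (adjoint Q₂) ∘L A = A ∘L Q₂) :
    Q₁ = Q₂ :=
  a_symmetric_idempotent_unique_general A hAinj S Q₁ Q₂ hQ₁ hQ₂ hR₁ hR₂ hA₁ hA₂
end

section
/- If B is A-symmetric and f lies in H and in the L-closure of ker B, then f ∈ ker B; that is, the closure of ker B in L intersected with H equals ker B. -/
open ContinuousLinearMap
open scoped InnerProductSpace

/-- If `B` is `A`-symmetric and `f ∈ H` lies in the `L`-closure of `ker B`, then `B f = 0`: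
the closure of `ker B` in the completion `L`, intersected with `H`, equals `ker B`. -/
theorem kernel_closure_intersection
    {H L : Type*} [NormedAddCommGroup H] [InnerProductSpace ℂ H] [CompleteSpace H]
    [NormedAddCommGroup L] [InnerProductSpace ℂ L] [CompleteSpace L]
    (A : H →L[ℂ] H) (hA : A.IsPositive) (hAinj : Function.Injective A)
    (e : H →ₗ[ℂ] L) (hDense : DenseRange e)
    (hInner : ∀ f g : H, ⟪e f, e g⟫_ℂ = ⟪A f, g⟫_ℂ)
    (B : H →L[ℂ] H) (hB : (adjoint B) ∘L A = A ∘L B)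
    (f : H) (hf : e f ∈ closure (e '' {x : H | B x = 0})) :
    B f = 0 := by
  have hsym : ∀ x y : H, ⟪A x, y⟫_ℂ = ⟪x, A y⟫_ℂ := by
    intro x y
    conv_lhs => rw [← hA.isSelfAdjoint.adjoint_eq]
    exact ContinuousLinearMap.adjoint_inner_left A y x
  -- key: for every g, ⟪A (B f), g⟫ = 0
  have key : ∀ g : H, ⟪A (B f), g⟫_ℂ = 0 := by
    intro g
    have h1 : ⟪A (B f), g⟫_ℂ = ⟪e f, e (B g)⟫_ℂ := by
      have : A (B f) = adjoint B (A f) := by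
        have := congrArg (fun T : H →L[ℂ] H => T f) hB
        simpa using this.symm
      rw [this, ContinuousLinearMap.adjoint_inner_left, hInner]
    rw [h1]
    have hclosed : IsClosed {z : L | ⟪z, e (B g)⟫_ℂ = 0} :=
      isClosed_eq (continuous_id.inner continuous_const) continuous_const
    have hsub : e '' {x : H | B x = 0} ⊆ {z : L | ⟪z, e (B g)⟫_ℂ = 0} := by
      rintro _ ⟨x, hx, rfl⟩
      have hx0 : B x = 0 := hx
      have : ⟪e x, e (B g)⟫_ℂ = ⟪B x, A g⟫_ℂ := by
        rw [hInner, hsym]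
        have : A (B g) = adjoint B (A g) := by
          have := congrArg (fun T : H →L[ℂ] H => T g) hB
          simpa using this.symm
        rw [this, ContinuousLinearMap.adjoint_inner_right]
      simpa [hx0] using this
    exact closure_minimal hsub hclosed hf
  have hABf : A (B f) = 0 := by
    have := ext_inner_right ℂ (x := A (B f)) (y := (0 : H)) (fun v => by
      simpa using key v)
    simpa using this
  have := hAinj (by simpa using hABf : A (B f) = A 0)
  simpa using this
end

section
/- Let Q₀ be an idempotent with Q₀*A = AQ₀, and let δ(X) = XQ₀ − Q₀X on B(H). The range of δ restricted to A-anti-symmetric operators consists exactly of the A-symmetric operators Y satisfying Q₀YQ₀ = 0 and (1−Q₀)Y(1−Q₀) = 0. Explicitly, if Y is A-symmetric and Q₀-codiagonal, then X = YQ₀ − Q₀Y is A-anti-symmetric and δ(X) = Y. -/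
open ContinuousLinearMap
open scoped InnerProductSpace

section Aux

variable {R : Type*} [Ring R] [StarRing R]

lemma aux_anti_to_sym (a q x : R) (hqa : star q * a = a * q)
    (hx : star x * a = -(a * x)) :
    star (x * q - q * x) * a = a * (x * q - q * x) := by
  have e : star (x * q - q * x) * a = star q * (star x * a) - star x * (star q * a) := by
    simp only [star_sub, star_mul]
    noncomm_ring
  rw [e, hx, hqa, mul_neg, ← mul_assoc, ← mul_assoc, hqa, hx]
  noncomm_ring

lemma aux_diag1 (q x : R) (hq : q * q = q) :
    q * ((x * q - q * x) * q) = 0 := by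
  have e : q * ((x * q - q * x) * q) = (q * x) * (q * q) - (q * q) * (x * q) := by
    noncomm_ring
  rw [e, hq]; noncomm_ring

lemma aux_diag2 (q x : R) (hq : q * q = q) :
    (1 - q) * ((x * q - q * x) * (1 - q)) = 0 := by
  have e : (1 - q) * ((x * q - q * x) * (1 - q)) =
      x * q - q * x - x * (q * q) + (q * q) * x + (q * x) * (q * q) - (q * q) * (x * q) := by
    noncomm_ring
  rw [e, hq]; noncomm_ring

lemma aux_sym_to_anti (a q y : R) (hqa : star q * a = a * q)
    (hy : star y * a = a * y) :
    star (y * q - q * y) * a = -(a * (y * q - q * y)) := by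
  have e : star (y * q - q * y) * a = star q * (star y * a) - star y * (star q * a) := by
    simp only [star_sub, star_mul]
    noncomm_ring
  rw [e, hy, hqa, ← mul_assoc, ← mul_assoc, hqa, hy]
  noncomm_ring

lemma aux_delta (q y : R) (hq : q * q = q) (h1 : q * (y * q) = 0)
    (h2 : (1 - q) * (y * (1 - q)) = 0) :
    (y * q - q * y) * q - q * ((y * q - q * y)) = y := by
  have e2 : (1 - q) * (y * (1 - q)) = y - y * q - q * y + q * (y * q) := by
    noncomm_ring
  rw [e2, h1, add_zero] at h2
  have hy2 : y - y * q = q * y := sub_eq_zero.mp h2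
  have e1 : (y * q - q * y) * q - q * ((y * q - q * y)) =
      y * (q * q) + (q * q) * y - q * (y * q) - q * (y * q) := by
    noncomm_ring
  rw [e1, hq, h1, sub_zero, sub_zero, ← hy2]
  abel

end Aux

/-- For an `A`-symmetric idempotent `Q₀`, the range of `δ(X) = X Q₀ - Q₀ X` restricted to
`A`-anti-symmetric operators consists exactly of the `A`-symmetric operators which are
`Q₀`-codiagonal. Explicitly, if `Y` is `A`-symmetric and `Q₀`-codiagonal, then
`X = Y Q₀ - Q₀ Y` is `A`-anti-symmetric and `δ(X) = Y`. -/
theorem range_of_delta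
    {H : Type*} [NormedAddCommGroup H] [InnerProductSpace ℂ H] [CompleteSpace H]
    (A : H →L[ℂ] H) (hA : A.IsPositive) (hAinj : Function.Injective A)
    (Q₀ : H →L[ℂ] H) (hQ₀ : Q₀ ∘L Q₀ = Q₀) (hQ₀A : (adjoint Q₀) ∘L A = A ∘L Q₀) :
    {Y : H →L[ℂ] H | ∃ X : H →L[ℂ] H,
        (adjoint X) ∘L A = -(A ∘L X) ∧ X ∘L Q₀ - Q₀ ∘L X = Y} =
      {Y : H →L[ℂ] H | (adjoint Y) ∘L A = A ∘L Y ∧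
        Q₀ ∘L Y ∘L Q₀ = 0 ∧ (1 - Q₀) ∘L Y ∘L (1 - Q₀) = 0} ∧
    ∀ Y : H →L[ℂ] H, (adjoint Y) ∘L A = A ∘L Y →
      Q₀ ∘L Y ∘L Q₀ = 0 → (1 - Q₀) ∘L Y ∘L (1 - Q₀) = 0 →
        (adjoint (Y ∘L Q₀ - Q₀ ∘L Y)) ∘L A = -(A ∘L (Y ∘L Q₀ - Q₀ ∘L Y)) ∧
        (Y ∘L Q₀ - Q₀ ∘L Y) ∘L Q₀ - Q₀ ∘L (Y ∘L Q₀ - Q₀ ∘L Y) = Y := by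
  simp only [← ContinuousLinearMap.mul_def, ← ContinuousLinearMap.star_eq_adjoint] at *
  constructor
  · ext Y
    simp only [Set.mem_setOf_eq]
    constructor
    · rintro ⟨X, hX, rfl⟩
      exact ⟨aux_anti_to_sym A Q₀ X hQ₀A hX, aux_diag1 Q₀ X hQ₀, aux_diag2 Q₀ X hQ₀⟩
    · rintro ⟨hY, h1, h2⟩
      exact ⟨Y * Q₀ - Q₀ * Y, aux_sym_to_anti A Q₀ Y hQ₀A hY,
        aux_delta Q₀ Y hQ₀ h1 h2⟩
  · intro Y hY h1 h2
    exact ⟨aux_sym_to_anti A Q₀ Y hQ₀A hY, aux_delta Q₀ Y hQ₀ h1 h2⟩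
end

section
/- Let Q₁ be an A-symmetric idempotent and δ₁, δ₂ the restrictions of X ↦ XQ₁ − Q₁X to A-anti-symmetric and A-symmetric operators respectively. Then δ₁δ₂δ₁ = δ₁ and δ₂δ₁δ₂ = δ₂; consequently δ₂δ₁ and δ₁δ₂ are idempotent linear maps, ker(δ₂δ₁) = ker(δ₁), and range(δ₁δ₂) = range(δ₁). -/
open ContinuousLinearMap
open scoped InnerProductSpace

/-! Writing `δ X = ⁅X, Q₁⁆`, everything is ring algebra in `B(H)`, with the adjoint as the star.
Expanding and using `Q₁² = Q₁`, `⁅⁅X, Q₁⁆, Q₁⁆ = X Q₁ - 2 Q₁ X Q₁ + Q₁ X`, and bracketing once more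
returns `⁅X, Q₁⁆`. Since `Q₁* A = A Q₁`, `(⁅X, Q₁⁆)* A = Q₁* (X* A) - (X* A) Q₁`, so `δ` flips the sign
in `X* A = ± A X`. The statements about `δ₁ δ₂` and `δ₂ δ₁` then follow from `δ³ = δ`. -/

section IdempotentBracket

variable {R : Type*} [Ring R] {q : R}

theorem IsIdempotentElem.lie_lie_lie (hq : IsIdempotentElem q) (x : R) :
    ⁅⁅⁅x, q⁆, q⁆, q⁆ = ⁅x, q⁆ := by
  simp only [Ring.lie_def, mul_sub, sub_mul, mul_assoc, hq.eq]
  simp only [← mul_assoc, hq.eq]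
  abel

variable [StarRing R] {a : R}

theorem star_lie_mul (hqa : star q * a = a * q) (x : R) :
    star ⁅x, q⁆ * a = star q * (star x * a) - star x * a * q := by
  simp only [Ring.lie_def, star_sub, star_mul, sub_mul, mul_assoc, hqa]

theorem star_lie_mul_of_star_mul_eq_neg (hqa : star q * a = a * q) {x : R}
    (hx : star x * a = -(a * x)) : star ⁅x, q⁆ * a = a * ⁅x, q⁆ := by
  rw [star_lie_mul hqa, hx, mul_neg, neg_mul, ← mul_assoc, hqa, Ring.lie_def]
  simp only [mul_sub, mul_assoc]
  abel

theorem star_lie_mul_of_star_mul_eq (hqa : star q * a = a * q) {x : R}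
    (hx : star x * a = a * x) : star ⁅x, q⁆ * a = -(a * ⁅x, q⁆) := by
  rw [star_lie_mul hqa, hx, ← mul_assoc, hqa, Ring.lie_def]
  simp only [mul_sub, neg_sub, mul_assoc]

end IdempotentBracket

theorem apply_apply_eq_zero_iff_of_apply_apply_apply {M : Type*} [Zero M] {f : M → M}
    (h0 : f 0 = 0) (h3 : ∀ x, f (f (f x)) = f x) (x : M) : f (f x) = 0 ↔ f x = 0 :=
  ⟨fun h => by rw [← h3, h, h0], fun h => by rw [h, h0]⟩

theorem delta_restrictions_pseudo_inverse_general
    {H : Type*} [NormedAddCommGroup H] [InnerProductSpace ℂ H] [CompleteSpace H]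
    (A : H →L[ℂ] H)
    (Q₁ : H →L[ℂ] H) (hQ₁ : Q₁ ∘L Q₁ = Q₁) (hQ₁A : (adjoint Q₁) ∘L A = A ∘L Q₁)
    (δ : (H →L[ℂ] H) → (H →L[ℂ] H)) (hδ : ∀ X, δ X = X ∘L Q₁ - Q₁ ∘L X) :
    (∀ X : H →L[ℂ] H, (adjoint X) ∘L A = -(A ∘L X) → (adjoint (δ X)) ∘L A = A ∘L (δ X)) ∧
    (∀ X : H →L[ℂ] H, (adjoint X) ∘L A = A ∘L X → (adjoint (δ X)) ∘L A = -(A ∘L (δ X))) ∧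
    (∀ X : H →L[ℂ] H, δ (δ (δ X)) = δ X) ∧
    (∀ X : H →L[ℂ] H, (adjoint X) ∘L A = -(A ∘L X) → (δ (δ X) = 0 ↔ δ X = 0)) ∧
    ({Y : H →L[ℂ] H | ∃ X, (adjoint X) ∘L A = A ∘L X ∧ δ (δ X) = Y} =
      {Y : H →L[ℂ] H | ∃ X, (adjoint X) ∘L A = -(A ∘L X) ∧ δ X = Y}) := by
  have hδ_lie : ∀ X, δ X = ⁅X, Q₁⁆ := hδ
  have hQ₁A' : star Q₁ * A = A * Q₁ := hQ₁A
  have hanti (X : H →L[ℂ] H) (hX : adjoint X ∘L A = -(A ∘L X)) :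
      adjoint (δ X) ∘L A = A ∘L δ X := by
    rw [hδ_lie]; exact star_lie_mul_of_star_mul_eq_neg hQ₁A' hX
  have hsym (X : H →L[ℂ] H) (hX : adjoint X ∘L A = A ∘L X) :
      adjoint (δ X) ∘L A = -(A ∘L δ X) := by
    rw [hδ_lie]; exact star_lie_mul_of_star_mul_eq hQ₁A' hX
  have hδ3 (X : H →L[ℂ] H) : δ (δ (δ X)) = δ X := by
    simp only [hδ_lie]; exact IsIdempotentElem.lie_lie_lie hQ₁ X
  refine ⟨hanti, hsym, hδ3,
    fun X _ => apply_apply_eq_zero_iff_of_apply_apply_apply (by simp [hδ]) hδ3 X, ?_⟩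
  ext Y
  constructor
  · rintro ⟨X, hX, rfl⟩
    exact ⟨δ X, hsym X hX, rfl⟩
  · rintro ⟨X, hX, rfl⟩
    exact ⟨δ X, hanti X hX, hδ3 X⟩

/-- For an `A`-symmetric idempotent `Q₁` and `δ(X) = X Q₁ - Q₁ X`: `δ` maps `A`-anti-symmetric
operators to `A`-symmetric ones and vice versa; `δ³ = δ` (so the restrictions `δ₁, δ₂` satisfy
`δ₁δ₂δ₁ = δ₁`, `δ₂δ₁δ₂ = δ₂`); `ker (δ₂δ₁) = ker δ₁`; and `range (δ₁δ₂) = range δ₁`. -/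
theorem delta_restrictions_pseudo_inverse
    {H : Type*} [NormedAddCommGroup H] [InnerProductSpace ℂ H] [CompleteSpace H]
    (A : H →L[ℂ] H) (hA : A.IsPositive) (hAinj : Function.Injective A)
    (Q₁ : H →L[ℂ] H) (hQ₁ : Q₁ ∘L Q₁ = Q₁) (hQ₁A : (adjoint Q₁) ∘L A = A ∘L Q₁)
    (δ : (H →L[ℂ] H) → (H →L[ℂ] H)) (hδ : ∀ X, δ X = X ∘L Q₁ - Q₁ ∘L X) :
    (∀ X : H →L[ℂ] H, (adjoint X) ∘L A = -(A ∘L X) → (adjoint (δ X)) ∘L A = A ∘L (δ X)) ∧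
    (∀ X : H →L[ℂ] H, (adjoint X) ∘L A = A ∘L X → (adjoint (δ X)) ∘L A = -(A ∘L (δ X))) ∧
    (∀ X : H →L[ℂ] H, δ (δ (δ X)) = δ X) ∧
    (∀ X : H →L[ℂ] H, (adjoint X) ∘L A = -(A ∘L X) → (δ (δ X) = 0 ↔ δ X = 0)) ∧
    ({Y : H →L[ℂ] H | ∃ X, (adjoint X) ∘L A = A ∘L X ∧ δ (δ X) = Y} =
      {Y : H →L[ℂ] H | ∃ X, (adjoint X) ∘L A = -(A ∘L X) ∧ δ X = Y}) :=
  delta_restrictions_pseudo_inverse_general A Q₁ hQ₁ hQ₁A δ hδ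
end
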